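/- For every γ ∈ (0,1) and σ > 0, the expectations under GPD(γ,σ) of the partial derivatives of the estimating function ψ satisfy: ∫₀^∞ (∂ψ_γ(x;γ,σ)/∂γ) f_{γ,σ}(x) dx = (γ−6)σ / ( 2(γ−2)³(γ+2) ), ∫₀^∞ (∂ψ_γ(x;γ,σ)/∂σ) f_{γ,σ}(x) dx = (6−γ) / ( 4(γ−2)²(γ+2) ), ∫₀^∞ (∂ψ_σ(x;γ,σ)/∂γ) f_{γ,σ}(x) dx = (6−γ) / ( 4(γ−2)²(γ+2) ), and ∫₀^∞ (∂ψ_σ(x;γ,σ)/∂σ) f_{γ,σ}(x) dx = 1 / ( σ(4 − γ²) ). -/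

import Mathlib

open Real MeasureTheory

/-- Density of GPD(γ,σ). -/
noncomputable def gpdPdf (γ σ x : ℝ) : ℝ := σ⁻¹ * (1 + γ * x / σ) ^ (-1 / γ - 1 : ℝ)

/-- The γ-component of the estimating function ψ. -/
noncomputable def psiGamma (γ σ x : ℝ) : ℝ :=
  σ / (2 * (γ - 2) ^ 2) +
    ((γ - 1) ^ 2 * γ ^ 2)⁻¹ *
      (-(γ ^ 2 * σ) +
        (σ / (σ + γ * x)) ^ (1 / γ : ℝ) *
          (γ * (γ * σ + (2 * γ - 1) * x) -
            (γ - 1) * (σ + γ * x) * Real.log (1 + γ * x / σ)))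

/-- The σ-component of the estimating function ψ. -/
noncomputable def psiSigma (γ σ x : ℝ) : ℝ :=
  -(1 / (2 * (γ - 2))) -
    ((γ - 1) * σ)⁻¹ * ((σ + x) * (σ / (σ + γ * x)) ^ (1 / γ : ℝ) - σ)

/-!
Write `Y = 1 + γx/σ` and `S = Y^(-1/γ)` for the survival function, so that the density is
`S / (σ Y)` and `(σ/(σ+γx))^(1/γ) = S`. Differentiating ψ and multiplying by the density turns
each integrand into a linear combination of monomials `S^m Y^(-j) (log Y)^k`. The substitution
`Y = e^t` reduces the integral of such a monomial to a Gamma integral: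
`∫₀^∞ S^m Y^(-j) (log Y)^k dx = (σ/γ) ∫₀^∞ t^k e^(-(m/γ + j - 1) t) dt = σ γ^k k! / (m + (j-1)γ)^(k+1)`.
The two mixed partial derivatives of ψ agree pointwise, so the second and third expectations
coincide.
-/

open Set
open scoped Nat

lemma integral_Ioi_one_rpow_mul_log_pow {p : ℝ} (hp : p < -1) (k : ℕ) :
    ∫ u in Ioi 1, u ^ p * log u ^ k = k ! / (-(p + 1)) ^ (k + 1) := by
  have hq : 0 < -(p + 1) := by linarith
  rw [show Ioi (1 : ℝ) = Ioi (exp 0) by rw [exp_zero], ← integral_comp_exp_Ioi]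
  calc ∫ t in Ioi 0, exp t • (exp t ^ p * log (exp t) ^ k)
      = ∫ t in Ioi 0, t ^ ((k + 1 : ℝ) - 1) * exp (-(-(p + 1) * t)) := by
        refine setIntegral_congr_fun measurableSet_Ioi fun t _ => ?_
        rw [log_exp, ← exp_mul, add_sub_cancel_right, rpow_natCast, smul_eq_mul,
          show -(-(p + 1) * t) = t + t * p by ring, exp_add]
        ring
    _ = (1 / -(p + 1)) ^ (k + 1 : ℝ) * Gamma (k + 1) :=
        integral_rpow_mul_exp_neg_mul_Ioi (by positivity) hq
    _ = k ! / (-(p + 1)) ^ (k + 1) := by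
        rw [Gamma_nat_eq_factorial, ← Nat.cast_succ, rpow_natCast, div_pow, one_pow,
          one_div_mul_eq_div]

lemma integral_comp_one_add_mul_Ioi (g : ℝ → ℝ) {c : ℝ} (hc : 0 < c) :
    ∫ x in Ioi 0, g (1 + c * x) = c⁻¹ * ∫ u in Ioi 1, g u := by
  have himage : (fun x => 1 + c * x) '' Ioi 0 = Ioi 1 := by
    rw [← image_image (1 + ·) (c * ·), image_mul_left_Ioi hc, mul_zero, image_const_add_Ioi,
      add_zero]
  rw [← himage, integral_image_eq_integral_abs_deriv_smul measurableSet_Ioi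
    (fun x _ => ((hasDerivAt_id' x).const_mul c).const_add 1 |>.hasDerivWithinAt)
    (fun a _ b _ h => by simpa [hc.ne'] using h), mul_one, abs_of_pos hc]
  simp only [smul_eq_mul, integral_const_mul, inv_mul_cancel_left₀ hc.ne']

noncomputable def gpdSurvival (γ σ x : ℝ) : ℝ := (1 + γ * x / σ) ^ (-1 / γ)

noncomputable def gpdMonomial (γ σ : ℝ) (m j k : ℕ) (x : ℝ) : ℝ :=
  gpdSurvival γ σ x ^ m * (1 + γ * x / σ)⁻¹ ^ j * log (1 + γ * x / σ) ^ k

noncomputable def gpdPolynomial (γ σ : ℝ) (terms : List (ℝ × ℕ × ℕ × ℕ)) (x : ℝ) : ℝ :=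
  (terms.map fun (a, m, j, k) => a * gpdMonomial γ σ m j k x).sum

section

variable {γ σ x : ℝ}

lemma integral_gpdMonomial (hγ : 0 < γ) (hσ : 0 < σ) {m j : ℕ} (k : ℕ)
    (hmj : 0 < m + (j - 1) * γ) :
    ∫ x in Ioi 0, gpdMonomial γ σ m j k x = σ * γ ^ k * k ! / (m + (j - 1) * γ) ^ (k + 1) := by
  have hp : -(m / γ + j) < -1 := by
    have : 0 < (m + (j - 1) * γ) / γ := by positivity
    rw [add_div, mul_div_cancel_right₀ _ hγ.ne'] at this
    linarith
  calc ∫ x in Ioi 0, gpdMonomial γ σ m j k x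
      = ∫ x in Ioi 0, (fun u => u ^ (-(m / γ + j)) * log u ^ k) (1 + γ / σ * x) := by
        refine setIntegral_congr_fun measurableSet_Ioi fun x hx => ?_
        have hY : 0 < 1 + γ * x / σ := by have := hx.out; positivity
        dsimp only
        rw [gpdMonomial, gpdSurvival, div_mul_eq_mul_div,
          show -(m / γ + j) = -1 / γ * m + -j by ring, rpow_add hY, rpow_mul hY.le, rpow_natCast,
          rpow_neg hY.le, rpow_natCast, inv_pow]
    _ = (γ / σ)⁻¹ * ∫ u in Ioi 1, u ^ (-(m / γ + j)) * log u ^ k :=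
        integral_comp_one_add_mul_Ioi (fun u => u ^ (-(m / γ + j)) * log u ^ k) (by positivity)
    _ = σ * γ ^ k * k ! / (m + (j - 1) * γ) ^ (k + 1) := by
        rw [integral_Ioi_one_rpow_mul_log_pow hp,
          show -(-(m / γ + j) + 1) = (m + (j - 1) * γ) / γ by field_simp; ring, div_pow]
        field_simp
        ring

lemma integrableOn_gpdMonomial (hγ : 0 < γ) (hσ : 0 < σ) {m j : ℕ} (k : ℕ)
    (hmj : 0 < m + (j - 1) * γ) : IntegrableOn (gpdMonomial γ σ m j k) (Ioi 0) := by
  refine Integrable.of_integral_ne_zero ?_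
  rw [integral_gpdMonomial hγ hσ k hmj]
  positivity

lemma gpdPolynomial_cons (γ σ a : ℝ) (m j k : ℕ) (terms : List (ℝ × ℕ × ℕ × ℕ)) :
    gpdPolynomial γ σ ((a, m, j, k) :: terms) =
      fun x => a * gpdMonomial γ σ m j k x + gpdPolynomial γ σ terms x :=
  rfl

lemma integrableOn_gpdPolynomial (hγ : 0 < γ) (hσ : 0 < σ) (terms : List (ℝ × ℕ × ℕ × ℕ))
    (h : ∀ t ∈ terms, 0 < t.2.1 + (t.2.2.1 - 1) * γ) :
    IntegrableOn (gpdPolynomial γ σ terms) (Ioi 0) := by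
  induction terms with
  | nil => exact integrableOn_zero
  | cons t terms ih =>
    obtain ⟨a, m, j, k⟩ := t
    rw [List.forall_mem_cons] at h
    rw [gpdPolynomial_cons]
    exact ((integrableOn_gpdMonomial hγ hσ k h.1).const_mul a).add (ih h.2)

lemma integral_gpdPolynomial (hγ : 0 < γ) (hσ : 0 < σ) (terms : List (ℝ × ℕ × ℕ × ℕ))
    (h : ∀ t ∈ terms, 0 < t.2.1 + (t.2.2.1 - 1) * γ) :
    ∫ x in Ioi 0, gpdPolynomial γ σ terms x =
      (terms.map fun (a, m, j, k) => a * (σ * γ ^ k * k ! / (m + (j - 1) * γ) ^ (k + 1))).sum := by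
  induction terms with
  | nil => simp [gpdPolynomial]
  | cons t terms ih =>
    obtain ⟨a, m, j, k⟩ := t
    rw [List.forall_mem_cons] at h
    rw [gpdPolynomial_cons, integral_add ((integrableOn_gpdMonomial hγ hσ k h.1).const_mul a)
      (integrableOn_gpdPolynomial hγ hσ terms h.2), integral_const_mul,
      integral_gpdMonomial hγ hσ k h.1, ih h.2, List.map_cons, List.sum_cons]

lemma integral_gpdPolynomial_of_lt_one (hγ : 0 < γ) (hγ1 : γ < 1) (hσ : 0 < σ)
    (terms : List (ℝ × ℕ × ℕ × ℕ)) (hm : ∀ t ∈ terms, t.2.1 ≠ 0) :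
    ∫ x in Ioi 0, gpdPolynomial γ σ terms x =
      (terms.map fun (a, m, j, k) => a * (σ * γ ^ k * k ! / (m + (j - 1) * γ) ^ (k + 1))).sum := by
  refine integral_gpdPolynomial hγ hσ terms fun t ht => ?_
  have : (1 : ℝ) ≤ t.2.1 := by exact_mod_cast Nat.one_le_iff_ne_zero.2 (hm t ht)
  nlinarith [mul_nonneg (Nat.cast_nonneg (α := ℝ) t.2.2.1) hγ.le]

lemma div_add_mul_rpow_eq_gpdSurvival (hγ : 0 < γ) (hσ : 0 < σ) (hx : 0 ≤ x) :
    (σ / (σ + γ * x)) ^ (1 / γ) = gpdSurvival γ σ x := by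
  have hY : 0 < 1 + γ * x / σ := by positivity
  rw [gpdSurvival, show σ / (σ + γ * x) = (1 + γ * x / σ)⁻¹ by field_simp, inv_rpow hY.le,
    ← rpow_neg hY.le, neg_div]

lemma gpdPdf_eq (hγ : 0 < γ) (hσ : 0 < σ) (hx : 0 ≤ x) :
    gpdPdf γ σ x = σ⁻¹ * gpdSurvival γ σ x * (1 + γ * x / σ)⁻¹ := by
  have hY : 0 < 1 + γ * x / σ := by positivity
  rw [gpdPdf, gpdSurvival, rpow_sub_one hY.ne', div_eq_mul_inv, mul_assoc]

lemma hasDerivAt_survival_gamma (hγ : 0 < γ) (hσ : 0 < σ) (hx : 0 ≤ x) :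
    HasDerivAt (fun g => (σ / (σ + g * x)) ^ (1 / g))
      (gpdSurvival γ σ x * (log (1 + γ * x / σ) / γ ^ 2 - x / (γ * (σ + γ * x)))) γ := by
  have hsx : 0 < σ + γ * x := by positivity
  have hbase : HasDerivAt (fun g => σ / (σ + g * x)) (-(σ * x) / (σ + γ * x) ^ 2) γ := by
    simpa using (hasDerivAt_const γ σ).fun_div (((hasDerivAt_id' γ).mul_const x).const_add σ)
      hsx.ne'
  have hexp : HasDerivAt (fun g : ℝ => 1 / g) (-1 / γ ^ 2) γ := by
    simpa [one_div, neg_div] using hasDerivAt_inv hγ.ne'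
  refine (hbase.rpow hexp (by positivity)).congr_deriv ?_
  rw [rpow_sub_one (by positivity), div_add_mul_rpow_eq_gpdSurvival hγ hσ hx,
    show σ / (σ + γ * x) = (1 + γ * x / σ)⁻¹ by field_simp, log_inv]
  field_simp
  ring

lemma hasDerivAt_survival_sigma (hγ : 0 < γ) (hσ : 0 < σ) (hx : 0 ≤ x) :
    HasDerivAt (fun s => (s / (s + γ * x)) ^ (1 / γ))
      (gpdSurvival γ σ x * (x / (σ * (σ + γ * x)))) σ := by
  have hsx : 0 < σ + γ * x := by positivity
  have hbase : HasDerivAt (fun s => s / (s + γ * x)) (γ * x / (σ + γ * x) ^ 2) σ := by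
    simpa using (hasDerivAt_id' σ).fun_div ((hasDerivAt_id' σ).add_const (γ * x)) hsx.ne'
  refine (hbase.rpow_const (Or.inl (by positivity))).congr_deriv ?_
  rw [rpow_sub_one (by positivity), div_add_mul_rpow_eq_gpdSurvival hγ hσ hx]
  field_simp

lemma hasDerivAt_log_one_add_mul_div (hγ : 0 < γ) (hσ : 0 < σ) (hx : 0 ≤ x) :
    HasDerivAt (fun g => log (1 + g * x / σ)) (x / (σ + γ * x)) γ := by
  have hY : 0 < 1 + γ * x / σ := by positivity
  refine (((((hasDerivAt_id' γ).mul_const x).div_const σ).const_add 1).log hY.ne').congr_deriv ?_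
  field_simp

lemma hasDerivAt_log_one_add_div (hγ : 0 < γ) (hσ : 0 < σ) (hx : 0 ≤ x) :
    HasDerivAt (fun s => log (1 + γ * x / s)) (-(γ * x) / (σ * (σ + γ * x))) σ := by
  have hY : 0 < 1 + γ * x / σ := by positivity
  refine (((hasDerivAt_inv hσ.ne').const_mul (γ * x)).const_add 1 |>.log
    (by simpa [div_eq_mul_inv] using hY.ne')).congr_deriv ?_
  field_simp

lemma hasDerivAt_psiSigma_gamma (hγ : 0 < γ) (hγ1 : γ ≠ 1) (hγ2 : γ ≠ 2) (hσ : 0 < σ)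
    (hx : 0 ≤ x) :
    HasDerivAt (fun g => psiSigma g σ x)
      (1 / (2 * (γ - 2) ^ 2) + ((σ + x) * gpdSurvival γ σ x - σ) / ((γ - 1) ^ 2 * σ) -
        (σ + x) * gpdSurvival γ σ x * (log (1 + γ * x / σ) / γ ^ 2 - x / (γ * (σ + γ * x))) /
          ((γ - 1) * σ)) γ := by
  have hγ1' : γ - 1 ≠ 0 := sub_ne_zero.2 hγ1
  have hγ2' : γ - 2 ≠ 0 := sub_ne_zero.2 hγ2
  refine (((hasDerivAt_const γ 1).fun_div (((hasDerivAt_id' γ).sub_const 2).const_mul 2)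
    (by positivity)).fun_neg.fun_sub
    ((((hasDerivAt_id' γ).sub_const 1).mul_const σ).fun_inv (by positivity) |>.fun_mul
      (((hasDerivAt_survival_gamma hγ hσ hx).const_mul (σ + x)).sub_const σ))).congr_deriv ?_
  rw [div_add_mul_rpow_eq_gpdSurvival hγ hσ hx]
  field_simp
  ring

lemma deriv_psiGamma_sigma_eq_deriv_psiSigma_gamma (hγ : 0 < γ) (hγ1 : γ ≠ 1) (hγ2 : γ ≠ 2)
    (hσ : 0 < σ) (hx : 0 ≤ x) :
    deriv (fun s => psiGamma γ s x) σ = deriv (fun g => psiSigma g σ x) γ := by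
  have hγ1' : γ - 1 ≠ 0 := sub_ne_zero.2 hγ1
  have hsx : 0 < σ + γ * x := by positivity
  have hψγ : HasDerivAt (fun s => psiGamma γ s x) _ σ :=
    ((hasDerivAt_id' σ).div_const _).fun_add
      ((((hasDerivAt_id' σ).const_mul (γ ^ 2)).fun_neg.fun_add
        ((hasDerivAt_survival_sigma hγ hσ hx).fun_mul
          ((((hasDerivAt_id' σ).const_mul γ).add_const _).const_mul γ |>.fun_sub
            ((((hasDerivAt_id' σ).add_const (γ * x)).const_mul (γ - 1)).fun_mul
              (hasDerivAt_log_one_add_div hγ hσ hx))))).const_mul _)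
  rw [hψγ.deriv, (hasDerivAt_psiSigma_gamma hγ hγ1 hγ2 hσ hx).deriv,
    div_add_mul_rpow_eq_gpdSurvival hγ hσ hx]
  field_simp
  ring

lemma deriv_psiGamma_gamma_mul_gpdPdf (hγ : 0 < γ) (hγ1 : γ ≠ 1) (hγ2 : γ ≠ 2) (hσ : 0 < σ)
    (hx : 0 ≤ x) :
    deriv (fun g => psiGamma g σ x) γ * gpdPdf γ σ x = gpdPolynomial γ σ
      [(2 / (γ - 1) ^ 3 - 1 / (γ - 2) ^ 3, 1, 1, 0),
       ((-5 * γ ^ 3 + 3 * γ ^ 2 + γ - 1) / (γ ^ 4 * (γ - 1) ^ 3), 2, 0, 0),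
       (-2 * (γ + 1) / γ ^ 4, 2, 1, 0),
       (1 / γ ^ 4, 2, 2, 0),
       (2 * (γ ^ 2 + γ - 1) / (γ ^ 4 * (γ - 1) ^ 2), 2, 0, 1),
       (2 / γ ^ 4, 2, 1, 1),
       (-1 / (γ ^ 4 * (γ - 1)), 2, 0, 2)] x := by
  have hγ1' : γ - 1 ≠ 0 := sub_ne_zero.2 hγ1
  have hγ2' : γ - 2 ≠ 0 := sub_ne_zero.2 hγ2
  have hY : 0 < 1 + γ * x / σ := by positivity
  have hc : HasDerivAt (fun g => σ / (2 * (g - 2) ^ 2)) _ γ :=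
    (hasDerivAt_const γ σ).fun_div ((((hasDerivAt_id' γ).sub_const 2).fun_pow 2).const_mul 2)
      (by positivity)
  have hK : HasDerivAt (fun g => ((g - 1) ^ 2 * g ^ 2)⁻¹) _ γ :=
    ((((hasDerivAt_id' γ).sub_const 1).fun_pow 2).fun_mul ((hasDerivAt_id' γ).fun_pow 2)).fun_inv
      (by positivity)
  have hG : HasDerivAt
      (fun g => g * (g * σ + (2 * g - 1) * x) - (g - 1) * (σ + g * x) * log (1 + g * x / σ)) _ γ :=
    ((hasDerivAt_id' γ).fun_mul (((hasDerivAt_id' γ).mul_const σ).fun_add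
      ((((hasDerivAt_id' γ).const_mul 2).sub_const 1).mul_const x))).fun_sub
      ((((hasDerivAt_id' γ).sub_const 1).fun_mul
        (((hasDerivAt_id' γ).mul_const x).const_add σ)).fun_mul
        (hasDerivAt_log_one_add_mul_div hγ hσ hx))
  have hψ := hc.fun_add (hK.fun_mul ((((hasDerivAt_id' γ).fun_pow 2).mul_const σ).fun_neg.fun_add
    ((hasDerivAt_survival_gamma hγ hσ hx).fun_mul hG)))
  rw [show deriv (fun g => psiGamma g σ x) γ = _ from hψ.deriv, gpdPdf_eq hγ hσ hx,
    div_add_mul_rpow_eq_gpdSurvival hγ hσ hx]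
  simp only [gpdPolynomial, gpdMonomial, List.map_cons, List.map_nil, List.sum_cons,
    List.sum_nil]
  push_cast
  field_simp
  ring

lemma deriv_psiSigma_gamma_mul_gpdPdf (hγ : 0 < γ) (hγ1 : γ ≠ 1) (hγ2 : γ ≠ 2) (hσ : 0 < σ)
    (hx : 0 ≤ x) :
    deriv (fun g => psiSigma g σ x) γ * gpdPdf γ σ x = gpdPolynomial γ σ
      [((1 / (2 * (γ - 2) ^ 2) - 1 / (γ - 1) ^ 2) / σ, 1, 1, 0),
       ((γ ^ 2 + γ - 1) / (σ * γ ^ 3 * (γ - 1) ^ 2), 2, 0, 0),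
       ((γ + 2) / (σ * γ ^ 3), 2, 1, 0),
       (-1 / (σ * γ ^ 3), 2, 2, 0),
       (-1 / (σ * γ ^ 3 * (γ - 1)), 2, 0, 1),
       (-1 / (σ * γ ^ 3), 2, 1, 1)] x := by
  have hγ1' : γ - 1 ≠ 0 := sub_ne_zero.2 hγ1
  have hγ2' : γ - 2 ≠ 0 := sub_ne_zero.2 hγ2
  have hY : 0 < 1 + γ * x / σ := by positivity
  rw [(hasDerivAt_psiSigma_gamma hγ hγ1 hγ2 hσ hx).deriv, gpdPdf_eq hγ hσ hx]
  simp only [gpdPolynomial, gpdMonomial, List.map_cons, List.map_nil, List.sum_cons,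
    List.sum_nil]
  field_simp
  ring

lemma deriv_psiSigma_sigma_mul_gpdPdf (hγ : 0 < γ) (hγ1 : γ ≠ 1) (hσ : 0 < σ) (hx : 0 ≤ x) :
    deriv (fun s => psiSigma γ s x) σ * gpdPdf γ σ x = gpdPolynomial γ σ
      [(1 / (σ * γ) ^ 2, 2, 0, 0), (-2 / (σ * γ) ^ 2, 2, 1, 0), (1 / (σ * γ) ^ 2, 2, 2, 0)] x := by
  have hγ1' : γ - 1 ≠ 0 := sub_ne_zero.2 hγ1
  have hY : 0 < 1 + γ * x / σ := by positivity
  have hψ : HasDerivAt (fun s => psiSigma γ s x) _ σ :=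
    (((hasDerivAt_id' σ).const_mul (γ - 1)).fun_inv (by positivity) |>.fun_mul
      ((((hasDerivAt_id' σ).add_const x).fun_mul (hasDerivAt_survival_sigma hγ hσ hx)).fun_sub
        (hasDerivAt_id' σ))).const_sub _
  rw [hψ.deriv, gpdPdf_eq hγ hσ hx, div_add_mul_rpow_eq_gpdSurvival hγ hσ hx]
  simp only [gpdPolynomial, gpdMonomial, List.map_cons, List.map_nil, List.sum_cons,
    List.sum_nil]
  field_simp
  ring

end

/-- expectations under GPD(γ,σ) of the partial derivatives of the estimating
function ψ. -/
theorem psi_deriv_expectations (γ : ℝ) (hγ : γ ∈ Set.Ioo (0 : ℝ) 1) (σ : ℝ) (hσ : 0 < σ) :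
    (∫ x in Set.Ioi (0 : ℝ), deriv (fun g : ℝ => psiGamma g σ x) γ * gpdPdf γ σ x
      = (γ - 6) * σ / (2 * (γ - 2) ^ 3 * (γ + 2))) ∧
    (∫ x in Set.Ioi (0 : ℝ), deriv (fun s : ℝ => psiGamma γ s x) σ * gpdPdf γ σ x
      = (6 - γ) / (4 * (γ - 2) ^ 2 * (γ + 2))) ∧
    (∫ x in Set.Ioi (0 : ℝ), deriv (fun g : ℝ => psiSigma g σ x) γ * gpdPdf γ σ x
      = (6 - γ) / (4 * (γ - 2) ^ 2 * (γ + 2))) ∧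
    (∫ x in Set.Ioi (0 : ℝ), deriv (fun s : ℝ => psiSigma γ s x) σ * gpdPdf γ σ x
      = 1 / (σ * (4 - γ ^ 2))) := by
  obtain ⟨hγ0, hγ1⟩ := hγ
  have hγ1' : γ ≠ 1 := hγ1.ne
  have hγ2 : γ ≠ 2 := by linarith
  have hγγ := (setIntegral_congr_fun measurableSet_Ioi fun x hx =>
    deriv_psiGamma_gamma_mul_gpdPdf hγ0 hγ1' hγ2 hσ hx.out.le).trans
    (integral_gpdPolynomial_of_lt_one hγ0 hγ1 hσ _ (by simp))
  have hσγ := (setIntegral_congr_fun measurableSet_Ioi fun x hx =>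
    deriv_psiSigma_gamma_mul_gpdPdf hγ0 hγ1' hγ2 hσ hx.out.le).trans
    (integral_gpdPolynomial_of_lt_one hγ0 hγ1 hσ _ (by simp))
  have hσσ := (setIntegral_congr_fun measurableSet_Ioi fun x hx =>
    deriv_psiSigma_sigma_mul_gpdPdf hγ0 hγ1' hσ hx.out.le).trans
    (integral_gpdPolynomial_of_lt_one hγ0 hγ1 hσ _ (by simp))
  have hγσ : ∫ x in Ioi 0, deriv (fun s => psiGamma γ s x) σ * gpdPdf γ σ x =
      ∫ x in Ioi 0, deriv (fun g => psiSigma g σ x) γ * gpdPdf γ σ x :=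
    setIntegral_congr_fun measurableSet_Ioi fun x hx => by
      rw [deriv_psiGamma_sigma_eq_deriv_psiSigma_gamma hγ0 hγ1' hγ2 hσ hx.out.le]
  have : 2 - γ ≠ 0 := by linarith
  have : 2 + γ ≠ 0 := by linarith
  have : γ - 1 ≠ 0 := by linarith
  have : 4 - γ ^ 2 ≠ 0 := by nlinarith
  refine ⟨hγγ.trans ?_, (hγσ.trans hσγ).trans ?_, hσγ.trans ?_, hσσ.trans ?_⟩ <;>
    norm_num [Nat.factorial, ← sub_eq_add_neg] <;> field_simp <;> ring
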